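/- Let φ: ℌ → ℂ be the zero Lie algebra homomorphism and let V be a simple 𝔖-module. Then V is a quasi-Whittaker module of type φ if and only if the Heisenberg subalgebra ℌ acts trivially on V (i.e. p·V = q·V = z·V = 0), so that V is a simple module over the subalgebra 𝔰𝔩₂ = span_ℂ{e,h,f}. -/

import Mathlib

open UniversalEnvelopingAlgebra Polynomial

namespace QW

variable {S : Type} [LieRing S] [LieAlgebra ℂ S]

/-- The chosen elements `e, h, f, p, q, z` form a basis of `S` and satisfy the
structure constants of the Schrödinger algebra. -/
structure IsSchrodinger (e h f p q z : S) : Prop where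
  indep : LinearIndependent ℂ ![e, h, f, p, q, z]
  spans : Submodule.span ℂ (Set.range ![e, h, f, p, q, z]) = ⊤
  lie_he : ⁅h, e⁆ = (2 : ℂ) • e
  lie_hf : ⁅h, f⁆ = (-2 : ℂ) • f
  lie_ef : ⁅e, f⁆ = h
  lie_hp : ⁅h, p⁆ = p
  lie_hq : ⁅h, q⁆ = -q
  lie_pq : ⁅p, q⁆ = z
  lie_eq : ⁅e, q⁆ = p
  lie_pf : ⁅p, f⁆ = -q
  lie_fq : ⁅f, q⁆ = 0
  lie_ep : ⁅e, p⁆ = 0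
  lie_ze : ⁅z, e⁆ = 0
  lie_zh : ⁅z, h⁆ = 0
  lie_zf : ⁅z, f⁆ = 0
  lie_zp : ⁅z, p⁆ = 0
  lie_zq : ⁅z, q⁆ = 0

/-- `v` is a quasi-Whittaker vector of type `φ`, where the Lie algebra homomorphism
`φ : ℌ → ℂ` is recorded by its values `φp = φ(p)`, `φq = φ(q)` (necessarily `φ(z) = 0`). -/
def IsQWVector (p q z : S) {V : Type} [AddCommGroup V] [Module ℂ V] [LieRingModule S V]
    (φp φq : ℂ) (v : V) : Prop :=
  v ≠ 0 ∧ ⁅p, v⁆ = φp • v ∧ ⁅q, v⁆ = φq • v ∧ ⁅z, v⁆ = 0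

/-- `V` is a quasi-Whittaker module of type `φ`: it is generated by a
quasi-Whittaker vector of type `φ`. -/
def IsQWModule (p q z : S) (V : Type) [AddCommGroup V] [Module ℂ V]
    [LieRingModule S V] [LieModule ℂ S V] (φp φq : ℂ) : Prop :=
  ∃ v : V, IsQWVector p q z φp φq v ∧ LieSubmodule.lieSpan ℂ S {v} = ⊤

/-- The action of the universal enveloping algebra `U(𝔖)` on a `𝔖`-module. -/
noncomputable def uact {V : Type} [AddCommGroup V] [Module ℂ V] [LieRingModule S V]
    [LieModule ℂ S V] (u : UniversalEnvelopingAlgebra ℂ S) (v : V) : V :=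
  UniversalEnvelopingAlgebra.lift ℂ (LieModule.toEnd ℂ S V) u v

/-- The element `C = φ(p)²f − φ(q)²e − φ(p)φ(q)h ∈ U(𝔖)`. -/
noncomputable def Cel (e h f : S) (φp φq : ℂ) : UniversalEnvelopingAlgebra ℂ S :=
  φp ^ 2 • ι ℂ f - φq ^ 2 • ι ℂ e - (φp * φq) • ι ℂ h

/-- The element `C₀ = p²f − q²e − hpq ∈ U(𝔖)`. -/
noncomputable def C0 (e h f p q : S) : UniversalEnvelopingAlgebra ℂ S :=
  ι ℂ p ^ 2 * ι ℂ f - ι ℂ q ^ 2 * ι ℂ e - ι ℂ h * ι ℂ p * ι ℂ q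

/-- `δ_{a,0}`, as a complex scalar. -/
noncomputable def dC (a : ℂ) : ℂ := if a = 0 then 1 else 0

/-- `δ_{a,0}`, as a natural number. -/
noncomputable def dN (a : ℂ) : ℕ := if a = 0 then 1 else 0

/-- `X = δ_{φ(q),0}e + δ_{φ(p),0}f`. -/
noncomputable def Xel (e f : S) (φp φq : ℂ) : UniversalEnvelopingAlgebra ℂ S :=
  dC φq • ι ℂ e + dC φp • ι ℂ f

/-- `P₊ = δ_{φ(p),0}p + δ_{φ(q),0}q`. -/
noncomputable def Pplus (p q : S) (φp φq : ℂ) : UniversalEnvelopingAlgebra ℂ S :=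
  dC φp • ι ℂ p + dC φq • ι ℂ q

/-- `P₋ = δ_{φ(q),0}p + δ_{φ(p),0}q`. -/
noncomputable def Pminus (p q : S) (φp φq : ℂ) : UniversalEnvelopingAlgebra ℂ S :=
  dC φq • ι ℂ p + dC φp • ι ℂ q

/-- The quotient of `U(𝔖)` by a left ideal `I` is a Lie module over `S`. -/
noncomputable instance instLieRingModuleUQuot
    (I : Submodule (UniversalEnvelopingAlgebra ℂ S) (UniversalEnvelopingAlgebra ℂ S)) :
    LieRingModule S (UniversalEnvelopingAlgebra ℂ S ⧸ I) where
  bracket x m := ι ℂ x • m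
  add_lie x y m := by
    show ι ℂ (x + y) • m = ι ℂ x • m + ι ℂ y • m
    rw [map_add, add_smul]
  lie_add x m n := by
    show ι ℂ x • (m + n) = ι ℂ x • m + ι ℂ x • n
    rw [smul_add]
  leibniz_lie x y m := by
    show ι ℂ x • (ι ℂ y • m) = ι ℂ ⁅x, y⁆ • m + ι ℂ y • (ι ℂ x • m)
    letI := LieRing.ofAssociativeRing (A := UniversalEnvelopingAlgebra ℂ S)
    rw [LieHom.map_lie, LieRing.of_associative_ring_bracket, sub_smul, mul_smul, mul_smul]
    abel

noncomputable instance instLieModuleUQuot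
    (I : Submodule (UniversalEnvelopingAlgebra ℂ S) (UniversalEnvelopingAlgebra ℂ S)) :
    LieModule ℂ S (UniversalEnvelopingAlgebra ℂ S ⧸ I) where
  smul_lie c x m := by
    show ι ℂ (c • x) • m = c • (ι ℂ x • m)
    rw [map_smul, smul_assoc]
  lie_smul c x m := by
    show ι ℂ x • (c • m) = c • (ι ℂ x • m)
    rw [← algebraMap_smul (UniversalEnvelopingAlgebra ℂ S) c m, ← mul_smul,
      ← Algebra.commutes, mul_smul, algebraMap_smul]

/-- The left ideal of `U(𝔖)` generated by `p − φ(p)1`, `q − φ(q)1` and `z`. -/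
noncomputable def qwIdeal (p q z : S) (φp φq : ℂ) :
    Submodule (UniversalEnvelopingAlgebra ℂ S) (UniversalEnvelopingAlgebra ℂ S) :=
  Submodule.span _
    {ι ℂ p - algebraMap ℂ _ φp, ι ℂ q - algebraMap ℂ _ φq, ι ℂ z}

/-- The universal quasi-Whittaker module `M_φ = U(𝔖) ⊗_{U(ℌ)} ℂ_φ`, realised as the
quotient of `U(𝔖)` by the left ideal generated by `p − φ(p)1`, `q − φ(q)1`, `z`. -/
noncomputable abbrev Mphi (p q z : S) (φp φq : ℂ) : Type :=
  UniversalEnvelopingAlgebra ℂ S ⧸ qwIdeal p q z φp φq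

/-- The cyclic quasi-Whittaker vector `w = 1 ⊗ w` of `M_φ`. -/
noncomputable def wvec (p q z : S) (φp φq : ℂ) : Mphi p q z φp φq :=
  Submodule.Quotient.mk 1

/-- The submodule `W_{φ,ξ} = U(𝔖)(C − ξ)·w` of `M_φ`. -/
noncomputable def Wsub (e h f p q z : S) (φp φq ξ : ℂ) :
    LieSubmodule ℂ S (Mphi p q z φp φq) :=
  LieSubmodule.lieSpan ℂ S
    {uact (Cel e h f φp φq - algebraMap ℂ _ ξ) (wvec p q z φp φq)}

/-- The quotient module `L_{φ,ξ} = M_φ / W_{φ,ξ}`. -/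
noncomputable abbrev Lphi (e h f p q z : S) (φp φq ξ : ℂ) : Type :=
  Mphi p q z φp φq ⧸ Wsub e h f p q z φp φq ξ

/-- A (finite, decreasing) composition series `⊤ = W 0 > W 1 > ⋯ > W n = ⊥`
of a Lie module, with all the successive quotients irreducible. -/
def IsCompositionChain {V : Type} [AddCommGroup V] [Module ℂ V] [LieRingModule S V]
    [LieModule ℂ S V] {n : ℕ} (W : Fin (n + 1) → LieSubmodule ℂ S V) : Prop :=
  W 0 = ⊤ ∧ W (Fin.last n) = ⊥ ∧
    ∀ i : Fin n, W i.succ < W i.castSucc ∧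
      LieModule.IsIrreducible ℂ S
        (↥(W i.castSucc) ⧸ LieSubmodule.comap (W i.castSucc).incl (W i.succ))


/-- For the zero homomorphism `φ = 0` and a simple `𝔖`-module `V`,
`V` is a quasi-Whittaker module of type `φ` iff `ℌ` acts trivially on `V`
(so that `V` is a simple module over `𝔰𝔩₂ = span{e,h,f}`). -/
theorem quasiWhittaker_zero_iff_heisenberg_trivial
    (e h f p q z : S) (hS : IsSchrodinger e h f p q z)
    (V : Type) [AddCommGroup V] [Module ℂ V] [LieRingModule S V] [LieModule ℂ S V]
    (hV : LieModule.IsIrreducible ℂ S V) :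
    IsQWModule p q z V (0 : ℂ) (0 : ℂ) ↔
      ((∀ v : V, ⁅p, v⁆ = 0 ∧ ⁅q, v⁆ = 0 ∧ ⁅z, v⁆ = 0) ∧
        (∀ W : Submodule ℂ V,
          (∀ v ∈ W, ⁅e, v⁆ ∈ W ∧ ⁅h, v⁆ ∈ W ∧ ⁅f, v⁆ ∈ W) → W = ⊥ ∨ W = ⊤)) := by
  obtain ⟨hpe, hph, hpf, hpq, hqe, hqh, hqf, hzx⟩ :
      ⁅p, e⁆ = 0 ∧ ⁅p, h⁆ = -p ∧ ⁅p, f⁆ = -q ∧ ⁅p, q⁆ = z ∧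
      ⁅q, e⁆ = -p ∧ ⁅q, h⁆ = q ∧ ⁅q, f⁆ = 0 ∧
      (∀ x : S, ⁅z, x⁆ = 0) := by
    refine ⟨?_, ?_, hS.lie_pf, hS.lie_pq, ?_, ?_, ?_, ?_⟩
    · rw [← lie_skew, hS.lie_ep, neg_zero]
    · rw [← lie_skew, hS.lie_hp]
    · rw [← lie_skew, hS.lie_eq]
    · rw [← lie_skew, hS.lie_hq, neg_neg]
    · rw [← lie_skew, hS.lie_fq, neg_zero]
    · intro x
      have hx : x ∈ Submodule.span ℂ (Set.range ![e, h, f, p, q, z]) := by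
        rw [hS.spans]; trivial
      induction hx using Submodule.span_induction with
      | mem y hy =>
        obtain ⟨i, rfl⟩ := hy
        fin_cases i
        · exact hS.lie_ze
        · exact hS.lie_zh
        · exact hS.lie_zf
        · exact hS.lie_zp
        · exact hS.lie_zq
        · exact lie_self z
      | zero => exact lie_zero z
      | add a b _ _ ha hb => rw [lie_add, ha, hb, add_zero]
      | smul c a _ ha => rw [lie_smul, ha, smul_zero]
  constructor
  · rintro ⟨v, ⟨hv0, hp, hq, hz⟩, -⟩
    rw [zero_smul] at hp hq
    set WH : LieSubmodule ℂ S V :=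
      { carrier := {w | ⁅p, w⁆ = 0 ∧ ⁅q, w⁆ = 0 ∧ ⁅z, w⁆ = 0}
        add_mem' := fun ha hb =>
          ⟨by rw [lie_add, ha.1, hb.1, add_zero],
           by rw [lie_add, ha.2.1, hb.2.1, add_zero],
           by rw [lie_add, ha.2.2, hb.2.2, add_zero]⟩
        zero_mem' := ⟨lie_zero p, lie_zero q, lie_zero z⟩
        smul_mem' := fun c w hw =>
          ⟨by rw [lie_smul, hw.1, smul_zero],
           by rw [lie_smul, hw.2.1, smul_zero],
           by rw [lie_smul, hw.2.2, smul_zero]⟩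
        lie_mem := by
          rintro x w ⟨hwp, hwq, hwz⟩
          have hx : x ∈ Submodule.span ℂ (Set.range ![e, h, f, p, q, z]) := by
            rw [hS.spans]; trivial
          induction hx using Submodule.span_induction with
          | mem y hy =>
            have key : ∀ a : S, ⁅a, w⁆ = 0 → ⁅⁅a, y⁆, w⁆ = 0 → ⁅a, ⁅y, w⁆⁆ = 0 := by
              intro a h1 h2
              rw [leibniz_lie, h1, lie_zero, add_zero, h2]
            obtain ⟨i, rfl⟩ := hy
            have hpz : ⁅p, z⁆ = 0 := by rw [← lie_skew, hzx, neg_zero]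
            have hqz : ⁅q, z⁆ = 0 := by rw [← lie_skew, hzx, neg_zero]
            fin_cases i <;>
              refine ⟨key p hwp ?_, key q hwq ?_, key z hwz ?_⟩ <;>
              simp [show ![e, h, f, p, q, z] 5 = z from rfl, hpe, hph, hpf, hpq,
                hqe, hqh, hqf, hzx, hpz, hqz,
                lie_self, zero_lie, neg_lie, hwp, hwq, hwz, neg_zero]
          | zero =>
            rw [zero_lie]
            exact ⟨lie_zero p, lie_zero q, lie_zero z⟩
          | add a b _ _ ha hb =>
            rw [add_lie]
            exact ⟨by rw [lie_add, ha.1, hb.1, add_zero],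
              by rw [lie_add, ha.2.1, hb.2.1, add_zero],
              by rw [lie_add, ha.2.2, hb.2.2, add_zero]⟩
          | smul c a _ ha =>
            rw [smul_lie]
            exact ⟨by rw [lie_smul, ha.1, smul_zero],
              by rw [lie_smul, ha.2.1, smul_zero],
              by rw [lie_smul, ha.2.2, smul_zero]⟩ }
    have hWH : WH = ⊤ := by
      rcases hV.eq_bot_or_eq_top WH with hb | ht
      · exfalso
        have : v ∈ WH := ⟨hp, hq, hz⟩
        rw [hb] at this
        exact hv0 (by simpa using this)
      · exact ht
    have htriv : ∀ w : V, ⁅p, w⁆ = 0 ∧ ⁅q, w⁆ = 0 ∧ ⁅z, w⁆ = 0 := by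
      intro w
      have : w ∈ WH := hWH ▸ trivial
      exact this
    refine ⟨htriv, ?_⟩
    intro W hW
    set W' : LieSubmodule ℂ S V :=
      { carrier := W
        add_mem' := W.add_mem
        zero_mem' := W.zero_mem
        smul_mem' := fun c x hx => W.smul_mem c hx
        lie_mem := by
          intro x w hw
          have hx : x ∈ Submodule.span ℂ (Set.range ![e, h, f, p, q, z]) := by
            rw [hS.spans]; trivial
          induction hx using Submodule.span_induction with
          | mem y hy =>
            obtain ⟨i, rfl⟩ := hy
            fin_cases i
            · exact (hW w hw).1
            · exact (hW w hw).2.1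
            · exact (hW w hw).2.2
            · show ⁅p, w⁆ ∈ W; rw [(htriv w).1]; exact W.zero_mem
            · show ⁅q, w⁆ ∈ W; rw [(htriv w).2.1]; exact W.zero_mem
            · show ⁅z, w⁆ ∈ W; rw [(htriv w).2.2]; exact W.zero_mem
          | zero => rw [zero_lie]; exact W.zero_mem
          | add a b _ _ ha hb => rw [add_lie]; exact W.add_mem ha hb
          | smul c a _ ha => rw [smul_lie]; exact W.smul_mem c ha }
    rcases hV.eq_bot_or_eq_top W' with hb | ht
    · left
      ext w
      constructor
      · intro hw
        have : w ∈ W' := hw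
        rw [hb] at this
        simpa using this
      · intro hw
        simp only [Submodule.mem_bot] at hw
        rw [hw]; exact W.zero_mem
    · right
      ext w
      simp only [Submodule.mem_top, iff_true]
      have : w ∈ W' := ht ▸ trivial
      exact this
  · rintro ⟨htriv, -⟩
    have : Nontrivial V := LieModule.nontrivial_of_isIrreducible ℂ S V
    obtain ⟨v, hv0⟩ := exists_ne (0 : V)
    refine ⟨v, ⟨hv0, by rw [zero_smul]; exact (htriv v).1,
      by rw [zero_smul]; exact (htriv v).2.1, (htriv v).2.2⟩, ?_⟩
    rcases hV.eq_bot_or_eq_top (LieSubmodule.lieSpan ℂ S {v}) with hb | ht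
    · exfalso
      have : v ∈ LieSubmodule.lieSpan ℂ S {v} :=
        LieSubmodule.subset_lieSpan rfl
      rw [hb] at this
      exact hv0 (by simpa using this)
    · exact ht


end QW
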